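/- arXiv:2202.06103 — 2 statements merged into one kernel-verified Lean document; each statement's English description precedes it below -/
import Mathlib

section
/- Let μ : N → M be a von Neumann regular homomorphism of R-modules. If every Munn algebra isomorphic to 𝕄(R, N', M', μ') with μ' of the block form [[1_L, 0],[0,0]] for some decomposition is called normal, then every Munn algebra 𝕄(R, M, N, μ) with μ regular is isomorphic as a (non-unital) ring to a normal Munn algebra 𝕄(R, L, M', N') with L = Im μ. -/
/-- The Munn algebra `𝕄(R, M, N, μ)`: the additive group `Hom_R(M, N)` equipped with the
sandwich multiplication `a ⋅ b = a ∘ μ ∘ b`. -/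
@[nolint unusedArguments]
def Munn {R M N : Type*} [Ring R] [AddCommGroup M] [AddCommGroup N] [Module R M]
    [Module R N] (_ : N →ₗ[R] M) : Type _ := M →ₗ[R] N

namespace Munn

variable {R M N : Type*} [Ring R] [AddCommGroup M] [AddCommGroup N] [Module R M]
  [Module R N] (μ : N →ₗ[R] M)

instance : AddCommGroup (Munn μ) := inferInstanceAs (AddCommGroup (M →ₗ[R] N))

/-- Regard an element of the Munn algebra as a linear map. -/
def toHom (a : Munn μ) : M →ₗ[R] N := a

/-- Regard a linear map as an element of the Munn algebra. -/
def ofHom (a : M →ₗ[R] N) : Munn μ := a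

instance : NonUnitalRing (Munn μ) :=
  { (inferInstanceAs (AddCommGroup (M →ₗ[R] N)) : AddCommGroup (M →ₗ[R] N)) with
    mul := fun a b => ofHom μ ((toHom μ a) ∘ₗ μ ∘ₗ (toHom μ b))
    left_distrib := fun a b c => LinearMap.ext fun x => by
      show (toHom μ a) (μ ((toHom μ b + toHom μ c) x)) =
        (toHom μ a) (μ ((toHom μ b) x)) + (toHom μ a) (μ ((toHom μ c) x))
      simp
    right_distrib := fun a b c => LinearMap.ext fun x => by
      show (toHom μ a + toHom μ b) (μ ((toHom μ c) x)) =
        (toHom μ a) (μ ((toHom μ c) x)) + (toHom μ b) (μ ((toHom μ c) x))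
      simp
    zero_mul := fun a => LinearMap.ext fun x => by
      show (0 : M →ₗ[R] N) (μ ((toHom μ a) x)) = 0
      simp
    mul_zero := fun a => LinearMap.ext fun x => by
      show (toHom μ a) (μ ((0 : M →ₗ[R] N) x)) = 0
      simp
    mul_assoc := fun a b c => LinearMap.ext fun _ => rfl }

theorem mul_def (a b : Munn μ) : a * b = ofHom μ ((toHom μ a) ∘ₗ μ ∘ₗ (toHom μ b)) := rfl

end Munn

/-- The canonical sandwich homomorphism `μ₀ = [[1_L, 0], [0, 0]] : L ⊕ N' → L ⊕ M'`,
`(l, n') ↦ (l, 0)`, defining the normal Munn algebra `𝕄(R, L, M', N')`. -/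
def normalMu (R L M N : Type*) [Ring R] [AddCommGroup L] [AddCommGroup M] [AddCommGroup N]
    [Module R L] [Module R M] [Module R N] : (L × N) →ₗ[R] (L × M) :=
  (LinearMap.inl R L M) ∘ₗ (LinearMap.fst R L N)

/-!
If `μ θ μ = μ`, write `L = Im μ`. The map `μ θ : M → L` is a retraction of the inclusion and
`μ : N → L` has the section `θ`, so `M ≅ L × ker (μ θ)` and `N ≅ L × ker μ`. In these coordinates
`μ` becomes `(l, n') ↦ (l, 0)`, and conjugating by isomorphisms that intertwine the sandwich maps
is a ring isomorphism of Munn algebras.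
-/

namespace Munn

variable {R M N M₂ N₂ : Type*} [Ring R] [AddCommGroup M] [AddCommGroup N] [AddCommGroup M₂]
  [AddCommGroup N₂] [Module R M] [Module R N] [Module R M₂] [Module R N₂]

def congr {μ : N →ₗ[R] M} {μ₂ : N₂ →ₗ[R] M₂} (eM : M ≃ₗ[R] M₂) (eN : N ≃ₗ[R] N₂)
    (h : eM.symm.toLinearMap ∘ₗ μ₂ ∘ₗ eN.toLinearMap = μ) : Munn μ ≃+* Munn μ₂ :=
  { (LinearEquiv.arrowCongrAddEquiv eM eN : Munn μ ≃+ Munn μ₂) with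
    map_mul' := fun a b => by
      change eN.toLinearMap ∘ₗ (toHom μ a ∘ₗ μ ∘ₗ toHom μ b) ∘ₗ eM.symm.toLinearMap =
        (eN.toLinearMap ∘ₗ toHom μ a ∘ₗ eM.symm.toLinearMap) ∘ₗ μ₂ ∘ₗ
          (eN.toLinearMap ∘ₗ toHom μ b ∘ₗ eM.symm.toLinearMap)
      rw [← h]
      rfl }

end Munn

namespace LinearMap

variable {R M L : Type*} [Ring R] [AddCommGroup M] [AddCommGroup L] [Module R M] [Module R L]

def prodKerEquivOfRightInverse (f : M →ₗ[R] L) (g : L →ₗ[R] M) (h : f ∘ₗ g = LinearMap.id) :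
    M ≃ₗ[R] L × ker f :=
  have hfg : ∀ l, f (g l) = l := congr_fun (congrArg DFunLike.coe h)
  LinearEquiv.ofLinearMap
    (f.prod ((LinearMap.id - g ∘ₗ f).codRestrict (ker f) fun x => by simp [hfg]))
    (g.coprod (ker f).subtype)
    (by ext <;> simp [hfg])
    (by ext; simp)

@[simp]
theorem prodKerEquivOfRightInverse_apply_fst (f : M →ₗ[R] L) (g : L →ₗ[R] M)
    (h : f ∘ₗ g = LinearMap.id) (x : M) : (prodKerEquivOfRightInverse f g h x).1 = f x :=
  rfl

@[simp]
theorem prodKerEquivOfRightInverse_symm_apply (f : M →ₗ[R] L) (g : L →ₗ[R] M)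
    (h : f ∘ₗ g = LinearMap.id) (l : L) (k : ker f) :
    (prodKerEquivOfRightInverse f g h).symm (l, k) = g l + k :=
  rfl

section Regular

variable {N : Type*} [AddCommGroup N] [Module R N] {μ : N →ₗ[R] M} {θ : M →ₗ[R] N}

theorem apply_apply_of_regular_of_mem_range (hθ : μ ∘ₗ θ ∘ₗ μ = μ) {x : M} (hx : x ∈ range μ) :
    μ (θ x) = x := by
  obtain ⟨n, rfl⟩ := hx
  exact congr_fun (congrArg DFunLike.coe hθ) n

theorem codRestrict_comp_subtype_of_regular (hθ : μ ∘ₗ θ ∘ₗ μ = μ) :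
    (μ ∘ₗ θ).codRestrict (range μ) (fun x => ⟨θ x, rfl⟩) ∘ₗ (range μ).subtype =
      LinearMap.id := by
  ext ⟨x, hx⟩
  exact apply_apply_of_regular_of_mem_range hθ hx

theorem rangeRestrict_comp_of_regular (hθ : μ ∘ₗ θ ∘ₗ μ = μ) :
    μ.rangeRestrict ∘ₗ θ ∘ₗ (range μ).subtype = LinearMap.id := by
  ext ⟨x, hx⟩
  exact apply_apply_of_regular_of_mem_range hθ hx

end Regular

end LinearMap

/-- Every Munn algebra `𝕄(R, M, N, μ)` with `μ` von Neumann regular is isomorphic as a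
(non-unital) ring to a normal Munn algebra `𝕄(R, L, M', N')` with `L = Im μ`. -/
theorem regular_munn_iso_normal
    {R M N : Type*} [Ring R] [AddCommGroup M] [AddCommGroup N] [Module R M] [Module R N]
    (μ : N →ₗ[R] M) (h : ∃ θ : M →ₗ[R] N, μ ∘ₗ θ ∘ₗ μ = μ) :
    ∃ (M' : Submodule R M) (N' : Submodule R N),
      Nonempty (Munn μ ≃+* Munn (normalMu R ↥(LinearMap.range μ) ↥M' ↥N')) := by
  obtain ⟨θ, hθ⟩ := h
  let eM := LinearMap.prodKerEquivOfRightInverse _ _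
    (LinearMap.codRestrict_comp_subtype_of_regular hθ)
  let eN := LinearMap.prodKerEquivOfRightInverse _ _ (LinearMap.rangeRestrict_comp_of_regular hθ)
  refine ⟨_, _, ⟨Munn.congr eM eN ?_⟩⟩
  ext n
  simp [eM, eN, normalMu]
end

section
/- Let μ be a nonzero p × q matrix over a group G (entries in G⁰ = G ∪ {0}). Then by elementary row and column transformations (permutations and, over the group algebra, operations preserving the ranks of all Wedderburn components) one can transform μ into a matrix μ' which is regular, i.e., every row and every column of μ' contains a nonzero entry; consequently, for any field k with char k ∤ |G|, the semigroup algebras k𝒦(G, p, q, μ) and k𝒦(G, p, q, μ') are isomorphic, and 𝒦(G, p, q, μ') is a 0-simple semigroup. -/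
universe w

variable {G : Type*} [Group G] {p q : ℕ}

/-- The product of two nonzero elements `(i, g, λ)`, `(j, h, ν)` of the Rees matrix
semigroup `𝒦(G, p, q, μ)` with sandwich matrix `μ` over `G⁰ = G ∪ {0}`:
it is `(i, g·μ(λ,j)·h, ν)` if `μ(λ,j) ≠ 0`, and zero (`none`) otherwise. -/
def reesProd (μ : Matrix (Fin p) (Fin q) (Option G))
    (x y : Fin q × G × Fin p) : Option (Fin q × G × Fin p) :=
  (μ x.2.2 y.1).map fun g0 => (x.1, x.2.1 * g0 * y.2.1, y.2.2)

/-- The multiplication of the Rees matrix semigroup `𝒦(G, p, q, μ)` (with zero `none`). -/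
def reesMul (μ : Matrix (Fin p) (Fin q) (Option G))
    (x y : Option (Fin q × G × Fin p)) : Option (Fin q × G × Fin p) :=
  x.bind fun a => y.bind fun b => reesProd μ a b

/-- The sandwich matrix `μ` is regular: every row and every column contains a nonzero
entry. -/
def IsRegularSandwich (μ : Matrix (Fin p) (Fin q) (Option G)) : Prop :=
  (∀ a : Fin p, ∃ b : Fin q, μ a b ≠ none) ∧ (∀ b : Fin q, ∃ a : Fin p, μ a b ≠ none)

/-- The Rees matrix semigroup `𝒦(G, p, q, μ)` is `0`-simple: its square is nonzero and its
only two-sided ideals are `{0}` and the whole semigroup. -/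
def IsZeroSimpleRees (μ : Matrix (Fin p) (Fin q) (Option G)) : Prop :=
  (∃ x y, reesMul μ x y ≠ none) ∧
  ∀ I : Set (Option (Fin q × G × Fin p)), none ∈ I →
    (∀ a ∈ I, ∀ s, reesMul μ s a ∈ I ∧ reesMul μ a s ∈ I) →
    I = {none} ∨ I = Set.univ

/-- The multiplication of the contracted semigroup algebra `k𝒦(G, p, q, μ)`: the `k`-vector
space with basis the nonzero elements of `𝒦(G, p, q, μ)`, products falling onto the
semigroup zero being identified with `0`. -/
noncomputable def contractedMul (K : Type w) [Field K]
    (μ : Matrix (Fin p) (Fin q) (Option G))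
    (f g : (Fin q × G × Fin p) →₀ K) : (Fin q × G × Fin p) →₀ K :=
  f.sum fun x cx => g.sum fun y cy =>
    match reesProd μ x y with
    | some z => Finsupp.single z (cx * cy)
    | none => 0

/-!
Writing `P` for the image of `μ` in `Mat(p × q, kG)`, the contracted algebra `k𝒦(G, p, q, μ)` is
the space of `q × p` matrices over `kG` with product `X ∘ Y = X P Y`. Hence if `P' = U P V` with
`U`, `V` invertible, then `X ↦ V⁻¹ X U⁻¹` is an isomorphism onto the algebra with sandwich `P'`.
Fix a nonzero entry `μ(a₀, b₀)`. Replacing every zero row by row `a₀`, and then every zero column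
by column `b₀`, multiplies `P` by matrices `1 + N` with `N² = 0`, and yields a regular matrix.
A regular Rees matrix semigroup is `0`-simple, since every nonzero element generates it as a
two-sided ideal.
-/

open Matrix

section MatrixModel

variable {m n M : Type*} (K : Type*) [CommSemiring K]

noncomputable def toMatrix [Finite m] [Finite n] :
    (m × M × n →₀ K) ≃ₗ[K] Matrix m n (MonoidAlgebra K M) :=
  Finsupp.domLCongr
      (((Equiv.refl m).prodCongr (Equiv.prodComm M n)).trans (Equiv.prodAssoc m n M).symm) ≪≫ₗ
    Finsupp.curryLinearEquiv K ≪≫ₗ Finsupp.linearEquivFunOnFinite K _ _ ≪≫ₗ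
    LinearEquiv.piCongrRight (fun _ => (MonoidAlgebra.coeffLinearEquiv K).symm) ≪≫ₗ
    LinearEquiv.curry K _ m n ≪≫ₗ Matrix.ofLinearEquiv K

theorem toMatrix_single [Finite m] [Finite n] [DecidableEq m] [DecidableEq n]
    (i : m) (x : M) (j : n) (c : K) :
    toMatrix K (Finsupp.single (i, x, j) c) = Matrix.single i j (MonoidAlgebra.single x c) := by
  ext i' j' x'
  simp [toMatrix, Matrix.single_apply, Pi.single_apply, apply_ite, eq_comm]

end MatrixModel

noncomputable def sandwichMatrix {m n M : Type*} (K : Type*) [Semiring K]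
    (μ : Matrix m n (Option M)) : Matrix m n (MonoidAlgebra K M) :=
  μ.map fun o => o.elim 0 fun x => MonoidAlgebra.single x 1

section UnitsMul

variable {l m n R : Type*} [Fintype m] [Fintype n] [DecidableEq m] [DecidableEq n] [Semiring R]

@[simp]
theorem Matrix.units_inv_mul_cancel_left (A : (Matrix m m R)ˣ) (X : Matrix m l R) :
    (↑A⁻¹ : Matrix m m R) * ((A : Matrix m m R) * X) = X := by
  rw [← Matrix.mul_assoc, Units.inv_mul, Matrix.one_mul]

@[simp]
theorem Matrix.units_mul_inv_cancel_left (A : (Matrix m m R)ˣ) (X : Matrix m l R) :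
    (A : Matrix m m R) * ((↑A⁻¹ : Matrix m m R) * X) = X := by
  simpa using Matrix.units_inv_mul_cancel_left A⁻¹ X

def Matrix.unitsMulMulLinearEquiv (K : Type*) [CommSemiring K] [Algebra K R]
    (A : (Matrix m m R)ˣ) (B : (Matrix n n R)ˣ) : Matrix m n R ≃ₗ[K] Matrix m n R where
  toFun X := (A : Matrix m m R) * X * (B : Matrix n n R)
  invFun X := (↑A⁻¹ : Matrix m m R) * X * (↑B⁻¹ : Matrix n n R)
  map_add' X Y := by rw [Matrix.mul_add, Matrix.add_mul]
  map_smul' c X := by rw [RingHom.id_apply, Matrix.mul_smul, Matrix.smul_mul]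
  left_inv X := by simp [Matrix.mul_assoc]
  right_inv X := by simp [Matrix.mul_assoc]

end UnitsMul

section ContractedAlgebra

variable (K : Type*) [Field K]

theorem toMatrix_contractedMul (μ : Matrix (Fin p) (Fin q) (Option G))
    (f g : Fin q × G × Fin p →₀ K) :
    toMatrix K (contractedMul K μ f g) = toMatrix K f * sandwichMatrix K μ * toMatrix K g := by
  have hsingle : ∀ x y (cx cy : K),
      toMatrix K (match reesProd μ x y with
        | some z => Finsupp.single z (cx * cy)
        | none => 0) =
      toMatrix K (Finsupp.single x cx) * sandwichMatrix K μ * toMatrix K (Finsupp.single y cy) := by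
    rintro ⟨i, g, a⟩ ⟨b, h, j⟩ cx cy
    rw [toMatrix_single, toMatrix_single, Matrix.single_mul_mul_single]
    cases hab : μ a b <;>
      simp only [reesProd, hab, Option.map_some, Option.map_none, sandwichMatrix,
        Matrix.map_apply, Option.elim, MonoidAlgebra.single_mul_single, mul_one, toMatrix_single,
        map_zero, zero_mul, mul_zero, Matrix.single_zero]
  conv_rhs => rw [← f.sum_single, ← g.sum_single]
  simp only [contractedMul, map_finsuppSum, hsingle]
  simp only [Finsupp.sum, Matrix.sum_mul, Matrix.mul_sum]
  exact Finset.sum_comm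

theorem exists_linearEquiv_contractedMul_of_sandwichMatrix_eq
    {μ μ' : Matrix (Fin p) (Fin q) (Option G)} (U : (Matrix (Fin p) (Fin p) (MonoidAlgebra K G))ˣ)
    (V : (Matrix (Fin q) (Fin q) (MonoidAlgebra K G))ˣ)
    (h : sandwichMatrix K μ' = (U : Matrix (Fin p) (Fin p) (MonoidAlgebra K G)) *
      sandwichMatrix K μ * (V : Matrix (Fin q) (Fin q) (MonoidAlgebra K G))) :
    ∃ φ : (Fin q × G × Fin p →₀ K) ≃ₗ[K] (Fin q × G × Fin p →₀ K),
      ∀ f g, φ (contractedMul K μ f g) = contractedMul K μ' (φ f) (φ g) := by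
  refine ⟨toMatrix K ≪≫ₗ Matrix.unitsMulMulLinearEquiv K V⁻¹ U⁻¹ ≪≫ₗ (toMatrix K).symm,
    fun f g => (toMatrix K).injective ?_⟩
  simp [toMatrix_contractedMul, h, Matrix.unitsMulMulLinearEquiv, Matrix.mul_assoc]

end ContractedAlgebra

section Regularization

variable {m n α : Type*}

open scoped Classical in
noncomputable def fillZeroRows (μ : Matrix m n (Option α)) (a₀ : m) : Matrix m n (Option α) :=
  of fun a b => if ∀ b', μ a b' = none then μ a₀ b else μ a b

noncomputable def fillZeroCols (μ : Matrix m n (Option α)) (b₀ : n) : Matrix m n (Option α) :=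
  (fillZeroRows μᵀ b₀)ᵀ

noncomputable def regularize (μ : Matrix m n (Option α)) (a₀ : m) (b₀ : n) :
    Matrix m n (Option α) :=
  fillZeroCols (fillZeroRows μ a₀) b₀

theorem fillZeroRows_apply_of_ne_none {μ : Matrix m n (Option α)} (a₀ : m) {a : m} {b : n}
    (h : μ a b ≠ none) : fillZeroRows μ a₀ a b = μ a b := by
  simp only [fillZeroRows, of_apply, ite_eq_right_iff]
  exact fun hrow => absurd (hrow b) h

theorem exists_fillZeroRows_ne_none {μ : Matrix m n (Option α)} {a₀ : m} {b₀ : n}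
    (h : μ a₀ b₀ ≠ none) (a : m) : ∃ b, fillZeroRows μ a₀ a b ≠ none := by
  classical
  by_cases hrow : ∀ b, μ a b = none
  · exact ⟨b₀, by simpa only [fillZeroRows, of_apply, if_pos hrow] using h⟩
  · obtain ⟨b, hb⟩ := not_forall.1 hrow
    exact ⟨b, by rwa [fillZeroRows_apply_of_ne_none a₀ hb]⟩

theorem fillZeroCols_apply_of_ne_none {μ : Matrix m n (Option α)} (b₀ : n) {a : m} {b : n}
    (h : μ a b ≠ none) : fillZeroCols μ b₀ a b = μ a b :=
  fillZeroRows_apply_of_ne_none (μ := μᵀ) b₀ h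

theorem exists_fillZeroCols_ne_none {μ : Matrix m n (Option α)} {a₀ : m} {b₀ : n}
    (h : μ a₀ b₀ ≠ none) (b : n) : ∃ a, fillZeroCols μ b₀ a b ≠ none :=
  exists_fillZeroRows_ne_none (μ := μᵀ) h b

theorem regularize_apply_of_ne_none {μ : Matrix m n (Option α)} (a₀ : m) (b₀ : n) {a : m}
    {b : n} (h : μ a b ≠ none) : regularize μ a₀ b₀ a b = μ a b := by
  rw [regularize, fillZeroCols_apply_of_ne_none, fillZeroRows_apply_of_ne_none a₀ h]
  rwa [fillZeroRows_apply_of_ne_none a₀ h]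

theorem isRegularSandwich_regularize {μ : Matrix (Fin p) (Fin q) (Option α)} {a₀ : Fin p}
    {b₀ : Fin q} (h : μ a₀ b₀ ≠ none) : IsRegularSandwich (regularize μ a₀ b₀) := by
  refine ⟨fun a => ?_, exists_fillZeroCols_ne_none (a₀ := a₀) ?_⟩
  · obtain ⟨b, hb⟩ := exists_fillZeroRows_ne_none h a
    exact ⟨b, by rwa [regularize, fillZeroCols_apply_of_ne_none b₀ hb]⟩
  · rwa [fillZeroRows_apply_of_ne_none a₀ h]

end Regularization

section SandwichRegularization

variable {m n M : Type*} (K : Type*) [Ring K] [Monoid M]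

theorem exists_sandwichMatrix_fillZeroRows_eq_mul [Fintype m] [DecidableEq m]
    {μ : Matrix m n (Option M)} {a₀ : m} {b₀ : n} (h : μ a₀ b₀ ≠ none) :
    ∃ U : (Matrix m m (MonoidAlgebra K M))ˣ, sandwichMatrix K (fillZeroRows μ a₀) =
      (U : Matrix m m (MonoidAlgebra K M)) * sandwichMatrix K μ := by
  classical
  -- `N` adds row `a₀` to every zero row; `N² = 0` because row `a₀` is not zero.
  let N : Matrix m m (MonoidAlgebra K M) :=
    of fun a c => if c = a₀ ∧ ∀ b, μ a b = none then 1 else 0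
  have ha₀ : ¬∀ b, μ a₀ b = none := fun hrow => h (hrow b₀)
  have hN : IsNilpotent N := ⟨2, by
    refine (sq N).trans <| Matrix.ext fun a c => Finset.sum_eq_zero fun j _ => ?_
    by_cases hj : j = a₀
    · simp [N, hj, ha₀]
    · simp [N, hj]⟩
  refine ⟨hN.isUnit_one_add.unit, ?_⟩
  rw [IsUnit.unit_spec, Matrix.add_mul, Matrix.one_mul]
  refine Matrix.ext fun a b => ?_
  by_cases ha : ∀ b, μ a b = none <;>
    simp [fillZeroRows, sandwichMatrix, N, Matrix.mul_apply, ha, ite_and]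

theorem exists_sandwichMatrix_fillZeroCols_eq_mul [Fintype n] [DecidableEq n]
    {μ : Matrix m n (Option M)} {a₀ : m} {b₀ : n} (h : μ a₀ b₀ ≠ none) :
    ∃ V : (Matrix n n (MonoidAlgebra K M))ˣ, sandwichMatrix K (fillZeroCols μ b₀) =
      sandwichMatrix K μ * (V : Matrix n n (MonoidAlgebra K M)) := by
  classical
  let N : Matrix n n (MonoidAlgebra K M) :=
    of fun c b => if c = b₀ ∧ ∀ a, μ a b = none then 1 else 0
  have hb₀ : ¬∀ a, μ a b₀ = none := fun hcol => h (hcol a₀)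
  have hN : IsNilpotent N := ⟨2, by
    refine (sq N).trans <| Matrix.ext fun c b => Finset.sum_eq_zero fun j _ => ?_
    by_cases hj : j = b₀
    · simp [N, hj, hb₀]
    · simp [N, hj]⟩
  refine ⟨hN.isUnit_one_add.unit, ?_⟩
  rw [IsUnit.unit_spec, Matrix.mul_add, Matrix.mul_one]
  refine Matrix.ext fun a b => ?_
  by_cases hb : ∀ a, μ a b = none <;>
    simp [fillZeroCols, fillZeroRows, sandwichMatrix, N, Matrix.mul_apply, hb, ite_and]

theorem exists_sandwichMatrix_regularize_eq [Fintype m] [Fintype n] [DecidableEq m]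
    [DecidableEq n] {μ : Matrix m n (Option M)} {a₀ : m} {b₀ : n} (h : μ a₀ b₀ ≠ none) :
    ∃ (U : (Matrix m m (MonoidAlgebra K M))ˣ) (V : (Matrix n n (MonoidAlgebra K M))ˣ),
      sandwichMatrix K (regularize μ a₀ b₀) = (U : Matrix m m (MonoidAlgebra K M)) *
        sandwichMatrix K μ * (V : Matrix n n (MonoidAlgebra K M)) := by
  obtain ⟨U, hU⟩ := exists_sandwichMatrix_fillZeroRows_eq_mul K h
  obtain ⟨V, hV⟩ := exists_sandwichMatrix_fillZeroCols_eq_mul K (a₀ := a₀)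
    (by rwa [fillZeroRows_apply_of_ne_none a₀ h] : fillZeroRows μ a₀ a₀ b₀ ≠ none)
  exact ⟨U, V, by rw [regularize, hV, hU]⟩

end SandwichRegularization

theorem IsRegularSandwich.exists_reesMul_reesMul_eq {μ : Matrix (Fin p) (Fin q) (Option G)}
    (hμ : IsRegularSandwich μ) {x : Option (Fin q × G × Fin p)} (hx : x ≠ none)
    (y : Option (Fin q × G × Fin p)) : ∃ s t, reesMul μ (reesMul μ s x) t = y := by
  obtain - | ⟨j', g', a'⟩ := y
  · exact ⟨none, none, rfl⟩
  obtain - | ⟨j, g, a⟩ := x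
  · exact absurd rfl hx
  obtain ⟨c, hc⟩ := hμ.2 j
  obtain ⟨d, hd⟩ := hμ.1 a
  obtain ⟨u, hu⟩ := Option.ne_none_iff_exists'.1 hc
  obtain ⟨v, hv⟩ := Option.ne_none_iff_exists'.1 hd
  refine ⟨some (j', 1, c), some (d, (u * g * v)⁻¹ * g', a'), ?_⟩
  simp only [reesMul, reesProd, Option.bind_some, hu, hv, Option.map_some]
  congr
  group

theorem isZeroSimpleRees_of_isRegularSandwich {μ : Matrix (Fin p) (Fin q) (Option G)}
    (hμ : IsRegularSandwich μ) {a : Fin p} {b : Fin q} (hab : μ a b ≠ none) :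
    IsZeroSimpleRees μ := by
  refine ⟨⟨some (b, 1, a), some (b, 1, a), by simpa [reesMul, reesProd] using hab⟩,
    fun I h0 hI => or_iff_not_imp_left.2 fun hne => ?_⟩
  obtain ⟨x, hxI, hx⟩ : ∃ x ∈ I, x ≠ none := by
    by_contra! hI0
    exact hne (Set.eq_singleton_iff_unique_mem.2 ⟨h0, hI0⟩)
  refine Set.eq_univ_of_forall fun y => ?_
  obtain ⟨s, t, rfl⟩ := hμ.exists_reesMul_reesMul_eq hx y
  exact (hI _ (hI x hxI s).1 t).2

/-- **Remark.** Let `μ` be a nonzero `p × q` sandwich matrix over `G⁰ = G ∪ {0}` for a finite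
group `G`.  Then `μ` can be transformed into a regular sandwich matrix `μ'` (every row and
column containing a nonzero entry) such that for every field `k` with `char k ∤ |G|` the
contracted semigroup algebras `k𝒦(G, p, q, μ)` and `k𝒦(G, p, q, μ')` are isomorphic; and
`𝒦(G, p, q, μ')` is a `0`-simple semigroup. -/
theorem rees_sandwich_regularization [Fintype G]
    (μ : Matrix (Fin p) (Fin q) (Option G)) (hμ : ∃ a b, μ a b ≠ none) :
    ∃ μ' : Matrix (Fin p) (Fin q) (Option G),
      IsRegularSandwich μ' ∧
      IsZeroSimpleRees μ' ∧
      ∀ (K : Type w) [Field K], (Fintype.card G : K) ≠ 0 →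
        ∃ φ : ((Fin q × G × Fin p) →₀ K) ≃+ ((Fin q × G × Fin p) →₀ K),
          (∀ f g, φ (contractedMul K μ f g) = contractedMul K μ' (φ f) (φ g)) ∧
          (∀ (c : K) f, φ (c • f) = c • φ f) := by
  obtain ⟨a₀, b₀, h₀⟩ := hμ
  have hreg := isRegularSandwich_regularize h₀
  refine ⟨regularize μ a₀ b₀, hreg,
    isZeroSimpleRees_of_isRegularSandwich hreg (by rwa [regularize_apply_of_ne_none a₀ b₀ h₀]),
    fun K _ _ => ?_⟩
  obtain ⟨U, V, hUV⟩ := exists_sandwichMatrix_regularize_eq K h₀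
  obtain ⟨φ, hφ⟩ := exists_linearEquiv_contractedMul_of_sandwichMatrix_eq K U V hUV
  exact ⟨φ.toAddEquiv, hφ, φ.map_smul⟩
end
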